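/- For every integer n ≥ 6, the Hadwiger number of the complement of the wheel graph W_n equals ⌊3(n−1)/4⌋, i.e., ⌊3(n−1)/4⌋ is the largest k such that K_k is a minor of the complement of W_n. -/

import Mathlib

open SimpleGraph

/-- `H` is a minor of `G` (branch-set / minor-model definition): each vertex of `H`
is represented by a connected branch set in `G`, branch sets are pairwise disjoint,
and edges of `H` are realized by edges between the corresponding branch sets. -/
def IsMinorOf {α β : Type*} (H : SimpleGraph α) (G : SimpleGraph β) : Prop :=
  ∃ f : α → Set β,
    (∀ a, (G.induce (f a)).Connected) ∧
    (∀ a b, a ≠ b → Disjoint (f a) (f b)) ∧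
    (∀ a b, H.Adj a b → ∃ u ∈ f a, ∃ v ∈ f b, G.Adj u v)

/-- The wheel graph `W n` on `n` vertices: hub `none` joined to the cycle
`C (n-1)` on the rim vertices `some i`, `i : ZMod (n-1)`. -/
def wheelGraph (n : ℕ) : SimpleGraph (Option (ZMod (n - 1))) where
  Adj x y := x ≠ y ∧
    (x = none ∨ y = none ∨
      ∃ i j : ZMod (n - 1), x = some i ∧ y = some j ∧ (i - j = 1 ∨ j - i = 1))
  symm := by
    refine ⟨?_⟩
    rintro x y ⟨hne, h⟩
    refine ⟨hne.symm, ?_⟩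
    rcases h with h | h | ⟨i, j, hx, hy, hij⟩
    · exact Or.inr (Or.inl h)
    · exact Or.inl h
    · exact Or.inr (Or.inr ⟨j, i, hy, hx, hij.symm⟩)
  loopless := ⟨fun x h => h.1 rfl⟩

/-!
The hub of `W_n` is isolated in the complement, so for `k ≥ 2` every branch set of a `K_k` model
lies in the rim, which induces the complement of the cycle `C_m`, `m = n - 1`. Branch sets other
than singletons use at least two of the `m` rim vertices, and the singleton branch sets form a
clique of the complement of `C_m`, i.e. an independent set of `C_m`, of size at most `m / 2`.
Hence `2k ≤ m + m / 2`.

Conversely, for `k = ⌊3m/4⌋` put `s = 2k - m` singletons on the positions `0, 2, …, 2s - 2` and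
list the remaining `2p = 2(m - k)` positions in increasing order; pair the `j`-th with the
`(j + p)`-th. The members of a pair are at cyclic distance at least two, as are suitable members
of any two pairs; a singleton is at cyclic distance at least two from some member of every pair,
because its two cycle-neighbours are consecutive in the list while a pair is `p ≥ 2` apart.
-/

open Finset

section Minor

variable {V : Type*} {G : SimpleGraph V}

lemma subset_support_of_connected_induce {s : Set V} (hs : (G.induce s).Connected)
    (h : ∃ u ∈ s, ∃ v, G.Adj u v) : s ⊆ G.support := by
  intro x hx
  rcases subsingleton_or_nontrivial s with _ | _
  · obtain ⟨u, hu, v, huv⟩ := h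
    obtain rfl : x = u := congrArg Subtype.val (Subsingleton.elim (⟨x, hx⟩ : s) ⟨u, hu⟩)
    exact huv.mem_support_left
  · obtain ⟨y, hxy⟩ := hs.preconnected.exists_adj_of_nontrivial ⟨x, hx⟩
    exact (comap_adj.mp hxy).mem_support_left

theorem two_mul_le_ncard_support_add_cliqueNum [Fintype V] {k : ℕ} (hk : 2 ≤ k)
    (h : IsMinorOf (⊤ : SimpleGraph (Fin k)) G) :
    2 * k ≤ G.support.ncard + G.cliqueNum := by
  classical
  obtain ⟨f, hconn, hdisj, hadj⟩ := h
  have hadj' : ∀ a b, a ≠ b → ∃ u ∈ f a, ∃ v ∈ f b, G.Adj u v := fun a b hab ↦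
    hadj a b ((top_adj a b).mpr hab)
  set B : Fin k → Finset V := fun a ↦ (f a).toFinset
  have hB_disj : (↑(univ : Finset (Fin k)) : Set (Fin k)).PairwiseDisjoint B := fun a _ b _ hab ↦
    Set.disjoint_toFinset.mpr (hdisj a b hab)
  set T := univ.filter fun a ↦ #(B a) = 1
  have hcount : 2 * k ≤ ∑ a, #(B a) + #T := by
    have hpos : ∀ a, 0 < #(B a) := fun a ↦
      card_pos.mpr (Set.toFinset_nonempty.mpr (Set.nonempty_coe_sort.mp (hconn a).nonempty))
    have : ∀ a, 2 ≤ #(B a) + if #(B a) = 1 then 1 else 0 := fun a ↦ by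
      have := hpos a; split_ifs <;> omega
    calc 2 * k = ∑ _a : Fin k, 2 := by simp [mul_comm]
      _ ≤ ∑ a, (#(B a) + if #(B a) = 1 then 1 else 0) := sum_le_sum fun a _ ↦ this a
      _ = ∑ a, #(B a) + #T := by rw [sum_add_distrib, card_filter]
  have hsupport : ∑ a, #(B a) ≤ G.support.ncard := by
    have : Nontrivial (Fin k) := Fin.nontrivial_iff_two_le.mpr hk
    rw [← card_biUnion hB_disj, Set.ncard_eq_toFinset_card']
    refine card_le_card fun x hx ↦ ?_
    obtain ⟨c, -, hc⟩ := mem_biUnion.mp hx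
    obtain ⟨d, hdc⟩ := exists_ne c
    obtain ⟨u, hu, v, -, huv⟩ := hadj' c d hdc.symm
    exact Set.mem_toFinset.mpr
      (subset_support_of_connected_induce (hconn c) ⟨u, hu, v, huv⟩ (Set.mem_toFinset.mp hc))
  have hclique : #T ≤ G.cliqueNum := by
    have hsingle : ∀ a ∈ T, ∃ x, f a = {x} := fun a ha ↦ by
      obtain ⟨x, hx⟩ := card_eq_one.mp (mem_filter.mp ha).2
      exact ⟨x, Set.toFinset_inj.mp (hx.trans (Set.toFinset_singleton x).symm)⟩
    have hcard : #(T.biUnion B) = #T := by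
      rw [card_biUnion (hB_disj.subset (subset_univ T)), card_eq_sum_ones]
      exact sum_congr rfl fun a ha ↦ (mem_filter.mp ha).2
    rw [← hcard]
    refine IsClique.card_le_cliqueNum (tc := fun x hx y hy hxy ↦ ?_)
    obtain ⟨a, ha, hxa⟩ := mem_biUnion.mp hx
    obtain ⟨b, hb, hyb⟩ := mem_biUnion.mp hy
    obtain ⟨x', hx'⟩ := hsingle a ha
    obtain ⟨y', hy'⟩ := hsingle b hb
    have hxx' : x = x' := by simpa [B, hx'] using hxa
    have hyy' : y = y' := by simpa [B, hy'] using hyb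
    have hab : a ≠ b := by
      intro hab
      subst hab
      exact hxy (by rw [hxx', hyy']; exact Set.singleton_injective (hx'.symm.trans hy'))
    obtain ⟨u, hu, v, hv, huv⟩ := hadj' a b hab
    rw [hx', Set.mem_singleton_iff] at hu
    rw [hy', Set.mem_singleton_iff] at hv
    rwa [hxx', hyy', ← hu, ← hv]
  omega

end Minor

lemma two_mul_card_le_card_of_forall_add_notMem {A : Type*} [AddGroup A] [Fintype A]
    [DecidableEq A] {g : A} {s : Finset A} (h : ∀ x ∈ s, x + g ∉ s) :
    2 * #s ≤ Fintype.card A := by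
  have hdisj : Disjoint s (s.map (Equiv.addRight g).toEmbedding) := by
    refine disjoint_right.mpr fun y hy hys ↦ ?_
    obtain ⟨x, hx, rfl⟩ := mem_map.mp hy
    exact h x hx hys
  calc 2 * #s = #(s ∪ s.map (Equiv.addRight g).toEmbedding) := by
        rw [card_union_of_disjoint hdisj, card_map, two_mul]
    _ ≤ Fintype.card A := card_le_univ _

lemma ZMod.natCast_ne_zero_of_pos_of_lt {m e : ℕ} (he : 0 < e) (hem : e < m) :
    (e : ZMod m) ≠ 0 := by
  rw [Ne, ZMod.natCast_eq_zero_iff]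
  exact Nat.not_dvd_of_pos_of_lt he hem

section Wheel

variable {n : ℕ}

lemma wheelGraph_compl_not_adj_none (v : Option (ZMod (n - 1))) :
    ¬ (wheelGraph n)ᶜ.Adj none v :=
  fun h ↦ h.2 ⟨h.1, Or.inl rfl⟩

lemma wheelGraph_compl_adj_some {i j : ZMod (n - 1)} :
    (wheelGraph n)ᶜ.Adj (some i) (some j) ↔ j - i ≠ 0 ∧ j - i ≠ 1 ∧ j - i ≠ -1 := by
  have hneg : i - j = 1 ↔ j - i = -1 := by rw [← neg_sub, neg_eq_iff_eq_neg]
  simp only [compl_adj, wheelGraph, ne_eq, Option.some.injEq, reduceCtorEq, false_or,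
    exists_and_left, exists_eq_left', not_and, sub_eq_zero, hneg]
  tauto

lemma wheelGraph_compl_support_subset : (wheelGraph n)ᶜ.support ⊆ Set.range some := by
  rintro (_ | i) ⟨v, hv⟩
  · exact (wheelGraph_compl_not_adj_none v hv).elim
  · exact ⟨i, rfl⟩

lemma ncard_support_wheelGraph_compl_le (hn : 2 ≤ n) :
    (wheelGraph n)ᶜ.support.ncard ≤ n - 1 := by
  have : NeZero (n - 1) := ⟨by omega⟩
  calc (wheelGraph n)ᶜ.support.ncard ≤ (Set.range (some : ZMod (n - 1) → _)).ncard :=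
        Set.ncard_le_ncard wheelGraph_compl_support_subset
    _ = n - 1 := by rw [Set.ncard_range_of_injective (Option.some_injective _), Nat.card_zmod]

lemma cliqueNum_wheelGraph_compl_le (hn : 3 ≤ n) : (wheelGraph n)ᶜ.cliqueNum ≤ (n - 1) / 2 := by
  classical
  have : Fact (1 < n - 1) := ⟨by omega⟩
  obtain ⟨c, hc⟩ := (wheelGraph n)ᶜ.exists_isNClique_cliqueNum
  rw [← hc.card_eq]
  by_cases hnone : none ∈ c
  · have : c ⊆ {none} := fun v hv ↦ mem_singleton.mpr <| by
      by_contra hne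
      exact wheelGraph_compl_not_adj_none v (hc.isClique hnone hv (Ne.symm hne))
    have := card_le_card this
    rw [card_singleton] at this
    omega
  · set C := c.preimage some (Option.some_injective _).injOn
    have hcC : C.image some = c := by
      rw [image_preimage, filter_true_of_mem]
      rintro (_ | i) hv
      · exact (hnone hv).elim
      · exact ⟨i, rfl⟩
    have hC : ∀ i ∈ C, i + 1 ∉ C := fun i hi hi1 ↦
      (wheelGraph_compl_adj_some.mp (hc.isClique (mem_preimage.mp hi) (mem_preimage.mp hi1)
        (by simp))).2.1 (by ring)
    have := two_mul_card_le_card_of_forall_add_notMem hC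
    rw [ZMod.card] at this
    rw [← hcC, card_image_of_injective _ (Option.some_injective _)]
    omega

def FarOnCycle (m x y : ℕ) : Prop := x + 2 ≤ y ∧ y + 2 ≤ x + m

lemma wheelGraph_compl_adj_of_farOnCycle {x y : ℕ} (h : FarOnCycle (n - 1) x y) :
    (wheelGraph n)ᶜ.Adj (some (x : ZMod (n - 1))) (some (y : ZMod (n - 1))) := by
  obtain ⟨hxy, hyx⟩ := h
  have hd : (y : ZMod (n - 1)) - x = ((y - x : ℕ) : ZMod (n - 1)) := by
    rw [Nat.cast_sub (by omega)]
  refine wheelGraph_compl_adj_some.mpr ⟨?_, fun h1 ↦ ?_, fun h1 ↦ ?_⟩ <;> rw [hd] at *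
  · exact ZMod.natCast_ne_zero_of_pos_of_lt (by omega) (by omega)
  · apply ZMod.natCast_ne_zero_of_pos_of_lt (m := n - 1) (e := y - x - 1) (by omega) (by omega)
    rw [Nat.cast_sub (by omega), h1, Nat.cast_one, sub_self]
  · apply ZMod.natCast_ne_zero_of_pos_of_lt (m := n - 1) (e := y - x + 1) (by omega) (by omega)
    rw [Nat.cast_add, h1, Nat.cast_one, neg_add_cancel]

lemma isMinorOf_wheelGraph_compl_of_farOnCycle {k : ℕ} (P : Fin k → Set ℕ)
    (hlt : ∀ a, ∀ x ∈ P a, x < n - 1)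
    (hdisj : ∀ a b, a ≠ b → Disjoint (P a) (P b))
    (hconn : ∀ a, (∃ x, P a = {x}) ∨ ∃ x y, P a = {x, y} ∧ FarOnCycle (n - 1) x y)
    (hfar : ∀ a b, a ≠ b →
      ∃ x ∈ P a, ∃ y ∈ P b, FarOnCycle (n - 1) x y ∨ FarOnCycle (n - 1) y x) :
    IsMinorOf (⊤ : SimpleGraph (Fin k)) (wheelGraph n)ᶜ := by
  let rim : ℕ → Option (ZMod (n - 1)) := fun x ↦ some x
  have hadj : ∀ x y, FarOnCycle (n - 1) x y ∨ FarOnCycle (n - 1) y x →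
      (wheelGraph n)ᶜ.Adj (rim x) (rim y) := by
    rintro x y (h | h)
    · exact wheelGraph_compl_adj_of_farOnCycle h
    · exact (wheelGraph_compl_adj_of_farOnCycle h).symm
  refine ⟨fun a ↦ rim '' P a, fun a ↦ ?_, fun a b hab ↦ ?_, fun a b hab ↦ ?_⟩
  · dsimp only
    rcases hconn a with ⟨x, hx⟩ | ⟨x, y, hxy, hfar⟩
    · rw [hx, Set.image_singleton]
      exact Connected.of_subsingleton
    · rw [hxy, Set.image_pair]
      exact induce_pair_connected_of_adj (hadj x y (Or.inl hfar))
  · refine Set.disjoint_left.mpr ?_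
    rintro _ ⟨x, hx, rfl⟩ ⟨y, hy, hyx⟩
    have hyx : y = x := by
      have := congrArg ZMod.val (Option.some_injective _ hyx)
      rwa [ZMod.val_cast_of_lt (hlt b y hy), ZMod.val_cast_of_lt (hlt a x hx)] at this
    exact Set.disjoint_left.mp (hdisj a b hab) hx (hyx ▸ hy)
  · obtain ⟨x, hx, y, hy, h⟩ := hfar a b ((top_adj a b).mp hab)
    exact ⟨rim x, Set.mem_image_of_mem _ hx, rim y, Set.mem_image_of_mem _ hy, hadj x y h⟩

end Wheel

/-- The rim positions left free by the singleton branch sets `{0}, {2}, …, {2s - 2}`,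
in increasing order. -/
def rimPos (s i : ℕ) : ℕ := if i < s then 2 * i + 1 else s + i

def branchPos (s p a : ℕ) : Set ℕ :=
  if a < s then {2 * a} else {rimPos s (a - s), rimPos s (a - s + p)}

section Positions

variable {s p : ℕ}

lemma rimPos_add_sub_le {i j : ℕ} (hij : i ≤ j) : rimPos s i + (j - i) ≤ rimPos s j := by
  unfold rimPos; split_ifs <;> omega

lemma rimPos_strictMono : StrictMono (rimPos s) := fun i j hij ↦ by
  have := rimPos_add_sub_le (s := s) hij.le
  omega

lemma one_le_rimPos (hs : 1 ≤ s) (i : ℕ) : 1 ≤ rimPos s i := by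
  unfold rimPos; split_ifs <;> omega

lemma rimPos_lt {i : ℕ} (hi : i < 2 * p) : rimPos s i < s + 2 * p := by
  unfold rimPos; split_ifs <;> omega

lemma rimPos_ne_two_mul {i t : ℕ} (ht : t < s) : rimPos s i ≠ 2 * t := by
  unfold rimPos; split_ifs <;> omega

lemma farOnCycle_rimPos (hs : 1 ≤ s) {i j : ℕ} (hij : i + 2 ≤ j) (hj : j < 2 * p) :
    FarOnCycle (s + 2 * p) (rimPos s i) (rimPos s j) := by
  have := rimPos_add_sub_le (s := s) (show i ≤ j by omega)
  have := one_le_rimPos hs i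
  have := rimPos_lt (s := s) hj
  exact ⟨by omega, by omega⟩

lemma exists_farOnCycle_two_mul_rimPos (hp : 2 ≤ p) (hsp : s ≤ 2 * p) {t j : ℕ}
    (ht : t < s) (hj : j < p) :
    ∃ i ∈ ({j, j + p} : Set ℕ),
      FarOnCycle (s + 2 * p) (2 * t) (rimPos s i) ∨
        FarOnCycle (s + 2 * p) (rimPos s i) (2 * t) := by
  by_cases hc : FarOnCycle (s + 2 * p) (2 * t) (rimPos s j) ∨
      FarOnCycle (s + 2 * p) (rimPos s j) (2 * t)
  · exact ⟨j, Or.inl rfl, hc⟩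
  · refine ⟨j + p, Or.inr rfl, ?_⟩
    unfold FarOnCycle rimPos at *
    split_ifs at * <;> omega

lemma branchPos_lt (hsp : s ≤ 2 * p) {a : ℕ} (ha : a < s + p) :
    ∀ x ∈ branchPos s p a, x < s + 2 * p := by
  unfold branchPos
  split_ifs with has
  · rintro x rfl
    omega
  · rintro x (rfl | rfl) <;> exact rimPos_lt (by omega)

lemma branchPos_eq_singleton_or_pair (hp : 2 ≤ p) (hs : 1 ≤ s) {a : ℕ} (ha : a < s + p) :
    (∃ x, branchPos s p a = {x}) ∨
      ∃ x y, branchPos s p a = {x, y} ∧ FarOnCycle (s + 2 * p) x y := by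
  unfold branchPos
  split_ifs with has
  · exact Or.inl ⟨_, rfl⟩
  · exact Or.inr ⟨_, _, rfl, farOnCycle_rimPos hs (by omega : a - s + 2 ≤ a - s + p) (by omega)⟩

lemma disjoint_branchPos {a b : ℕ} (ha : a < s + p) (hb : b < s + p) (hab : a ≠ b) :
    Disjoint (branchPos s p a) (branchPos s p b) := by
  unfold branchPos
  have hne : ∀ i t, t < s → rimPos s i ≠ 2 * t := fun _ _ ↦ rimPos_ne_two_mul
  split_ifs with has hbs hbs <;>
    simp only [Set.disjoint_insert_left, Set.disjoint_singleton_left, Set.mem_insert_iff,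
      Set.mem_singleton_iff, rimPos_strictMono.injective.eq_iff, not_or]
  · omega
  · exact ⟨(hne _ _ has).symm, (hne _ _ has).symm⟩
  · exact ⟨hne _ _ hbs, hne _ _ hbs⟩
  · omega

lemma exists_farOnCycle_branchPos (hp : 2 ≤ p) (hs : 1 ≤ s) (hsp : s ≤ 2 * p) {a b : ℕ}
    (ha : a < s + p) (hb : b < s + p) (hab : a ≠ b) :
    ∃ x ∈ branchPos s p a, ∃ y ∈ branchPos s p b,
      FarOnCycle (s + 2 * p) x y ∨ FarOnCycle (s + 2 * p) y x := by
  unfold branchPos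
  split_ifs with has hbs hbs
  · refine ⟨_, rfl, _, rfl, ?_⟩
    unfold FarOnCycle
    omega
  · obtain ⟨i, hi, hfar⟩ := exists_farOnCycle_two_mul_rimPos hp hsp has (show b - s < p by omega)
    exact ⟨_, rfl, rimPos s i, hi.imp (congrArg _) (congrArg _), hfar⟩
  · obtain ⟨i, hi, hfar⟩ := exists_farOnCycle_two_mul_rimPos hp hsp hbs (show a - s < p by omega)
    exact ⟨rimPos s i, hi.imp (congrArg _) (congrArg _), _, rfl, hfar.symm⟩
  · rcases Nat.lt_or_gt_of_ne hab with hlt | hgt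
    · exact ⟨_, Or.inl rfl, _, Or.inr rfl, Or.inl (farOnCycle_rimPos hs (by omega) (by omega))⟩
    · exact ⟨_, Or.inr rfl, _, Or.inl rfl, Or.inr (farOnCycle_rimPos hs (by omega) (by omega))⟩

end Positions

theorem isMinorOf_top_wheelGraph_compl {n : ℕ} (hn : 6 ≤ n) :
    IsMinorOf (⊤ : SimpleGraph (Fin (3 * (n - 1) / 4))) (wheelGraph n)ᶜ := by
  set k := 3 * (n - 1) / 4
  set s := 2 * k - (n - 1)
  set p := n - 1 - k
  have hm : n - 1 = s + 2 * p := by omega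
  have hp : 2 ≤ p := by omega
  have hs : 1 ≤ s := by omega
  have hsp : s ≤ 2 * p := by omega
  have hk : ∀ a : Fin k, a.val < s + p := fun a ↦ by omega
  refine isMinorOf_wheelGraph_compl_of_farOnCycle (fun a ↦ branchPos s p a)
    (hm ▸ fun a ↦ branchPos_lt hsp (hk a))
    (fun a b hab ↦ disjoint_branchPos (hk a) (hk b) (Fin.val_ne_of_ne hab))
    (hm ▸ fun a ↦ branchPos_eq_singleton_or_pair hp hs (hk a))
    (hm ▸ fun a b hab ↦
      exists_farOnCycle_branchPos hp hs hsp (hk a) (hk b) (Fin.val_ne_of_ne hab))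

/-- For `n ≥ 6`, the Hadwiger number of the complement of the wheel graph `W n`
is exactly `⌊3(n-1)/4⌋`. -/
theorem wheel_compl_hadwiger (n : ℕ) (hn : 6 ≤ n) :
    IsGreatest {k : ℕ | IsMinorOf (⊤ : SimpleGraph (Fin k)) (wheelGraph n)ᶜ}
      (3 * (n - 1) / 4) := by
  refine ⟨isMinorOf_top_wheelGraph_compl hn, fun k hk ↦ ?_⟩
  obtain hk2 | hk2 := Nat.lt_or_ge k 2
  · omega
  have : NeZero (n - 1) := ⟨by omega⟩
  have hminor := two_mul_le_ncard_support_add_cliqueNum hk2 hk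
  have hsupport := ncard_support_wheelGraph_compl_le (n := n) (by omega)
  have hclique := cliqueNum_wheelGraph_compl_le (n := n) (by omega)
  omega
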